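/- Hölder inequality for (ℓ,p)-box norms: let e be a nonempty finite index set, ℓ ≥ 2 an even integer, and 1 < p, q < ∞ conjugate exponents. Then for every f ∈ L_p(X_e) and g ∈ L_q(X_e), ‖fg‖_{□_ℓ(X_e)} ≤ ‖f‖_{□_{ℓ,p}(X_e)} · ‖g‖_{□_{ℓ,q}(X_e)}. -/

import Mathlib

open MeasureTheory Finset

/-- The `ℓ`-box norm over the coordinates in `e` of a function `f` on the product
of the probability spaces `(X i, μ i)`. -/
noncomputable def boxNormOn {ι : Type*} [Fintype ι] [DecidableEq ι] {X : ι → Type*}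
    [∀ i, MeasurableSpace (X i)] (μ : ∀ i, Measure (X i))
    (e : Finset ι) (ℓ : ℕ) (f : (∀ i, X i) → ℝ) : ℝ :=
  (∫ x : ∀ i, Fin ℓ → X i,
      ∏ ω ∈ Finset.univ.filter (fun ω : ι → Fin ℓ => ∀ i ∉ e, (ω i : ℕ) = 0),
        f (fun i => x i (ω i))
    ∂(Measure.pi fun i => Measure.pi fun _ : Fin ℓ => μ i)) ^ (((ℓ : ℝ) ^ e.card)⁻¹)


/-- The `(ℓ,p)`-box norm, `‖f‖_{□_{ℓ,p}} = ‖|f|^p‖_{□_ℓ}^{1/p}`. -/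
noncomputable def pBoxNormOn {ι : Type*} [Fintype ι] [DecidableEq ι] {X : ι → Type*}
    [∀ i, MeasurableSpace (X i)] (μ : ∀ i, Measure (X i))
    (e : Finset ι) (ℓ : ℕ) (p : ℝ) (f : (∀ i, X i) → ℝ) : ℝ :=
  (boxNormOn μ e ℓ (fun x => |f x| ^ p)) ^ p⁻¹

/-!
The integrand of the `ℓ`-box norm of `f g` is `∏_ω f(x^(ω)) g(x^(ω))`, whose absolute value is
`A · B` with `A = ∏_ω |f(x^(ω))|` and `B = ∏_ω |g(x^(ω))|`. Since `A ^ p` and `B ^ q` are the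
integrands of the `(ℓ,p)`- and `(ℓ,q)`-box norms, the classical Hölder inequality
`∫ A B ≤ ‖A‖_p ‖B‖_q` is the claim, raised to the power `ℓ ^ (-|e|)`.
-/

section Holder

variable {α κ : Type*} [MeasurableSpace α] {ν : Measure α}

lemma memLp_of_integrable_rpow {A : α → ℝ} {p : ℝ} (hp : 0 < p) (hA : ∀ x, 0 ≤ A x)
    (hint : Integrable (fun x => A x ^ p) ν) : MemLp A (ENNReal.ofReal p) ν := by
  have hA_meas : AEStronglyMeasurable A ν := by
    refine (hint.aestronglyMeasurable.aemeasurable.pow_const p⁻¹).aestronglyMeasurable.congr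
      (Filter.Eventually.of_forall fun x => ?_)
    exact Real.rpow_rpow_inv (hA x) hp.ne'
  rw [← integrable_norm_rpow_iff hA_meas (by simpa using hp) ENNReal.ofReal_ne_top,
    ENNReal.toReal_ofReal hp.le]
  simpa only [Real.norm_eq_abs, abs_of_nonneg (hA _)] using hint

theorem abs_integral_prod_mul_le_Lp_mul_Lq (s : Finset κ) {F G : κ → α → ℝ} {p q : ℝ}
    (hpq : p.HolderConjugate q)
    (hF : Integrable (fun x => ∏ k ∈ s, |F k x| ^ p) ν)
    (hG : Integrable (fun x => ∏ k ∈ s, |G k x| ^ q) ν) :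
    |∫ x, ∏ k ∈ s, F k x * G k x ∂ν| ≤
      (∫ x, ∏ k ∈ s, |F k x| ^ p ∂ν) ^ (1 / p) * (∫ x, ∏ k ∈ s, |G k x| ^ q ∂ν) ^ (1 / q) := by
  set A : α → ℝ := fun x => ∏ k ∈ s, |F k x|
  set B : α → ℝ := fun x => ∏ k ∈ s, |G k x|
  have hA : ∀ x, 0 ≤ A x := fun x => prod_nonneg fun k _ => abs_nonneg _
  have hB : ∀ x, 0 ≤ B x := fun x => prod_nonneg fun k _ => abs_nonneg _
  have hAp : ∀ x, A x ^ p = ∏ k ∈ s, |F k x| ^ p := fun x =>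
    (Real.finsetProd_rpow _ _ (fun k _ => abs_nonneg _) p).symm
  have hBq : ∀ x, B x ^ q = ∏ k ∈ s, |G k x| ^ q := fun x =>
    (Real.finsetProd_rpow _ _ (fun k _ => abs_nonneg _) q).symm
  have hA_memLp : MemLp A (ENNReal.ofReal p) ν :=
    memLp_of_integrable_rpow hpq.pos hA (by simpa only [hAp] using hF)
  have hB_memLp : MemLp B (ENNReal.ofReal q) ν :=
    memLp_of_integrable_rpow hpq.symm.pos hB (by simpa only [hBq] using hG)
  calc |∫ x, ∏ k ∈ s, F k x * G k x ∂ν|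
      ≤ ∫ x, |∏ k ∈ s, F k x * G k x| ∂ν := abs_integral_le_integral_abs
    _ = ∫ x, A x * B x ∂ν := by
      simp only [abs_prod, abs_mul, prod_mul_distrib, A, B]
    _ ≤ (∫ x, A x ^ p ∂ν) ^ (1 / p) * (∫ x, B x ^ q ∂ν) ^ (1 / q) :=
      integral_mul_le_Lp_mul_Lq_of_nonneg hpq (Filter.Eventually.of_forall hA)
        (Filter.Eventually.of_forall hB) hA_memLp hB_memLp
    _ = _ := by simp only [hAp, hBq]

end Holder

lemma rpow_le_of_abs_le_rpow_mul_rpow {s a b p q y : ℝ} (ha : 0 ≤ a) (hb : 0 ≤ b) (hy : 0 ≤ y)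
    (h : |s| ≤ a ^ (1 / p) * b ^ (1 / q)) : s ^ y ≤ (a ^ y) ^ p⁻¹ * (b ^ y) ^ q⁻¹ :=
  calc s ^ y ≤ |s| ^ y := (le_abs_self _).trans (Real.abs_rpow_le_abs_rpow _ _)
    _ ≤ (a ^ (1 / p) * b ^ (1 / q)) ^ y := Real.rpow_le_rpow (abs_nonneg _) h hy
    _ = (a ^ y) ^ p⁻¹ * (b ^ y) ^ q⁻¹ := by
      rw [Real.mul_rpow (by positivity) (by positivity)]
      simp only [one_div, ← Real.rpow_mul ha, ← Real.rpow_mul hb, mul_comm]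

lemma boxNormOn_univ {ι : Type*} [Fintype ι] [DecidableEq ι] {X : ι → Type*}
    [∀ i, MeasurableSpace (X i)] (μ : ∀ i, Measure (X i)) (ℓ : ℕ) (f : (∀ i, X i) → ℝ) :
    boxNormOn μ univ ℓ f =
      (∫ x : ∀ i, Fin ℓ → X i, ∏ ω : ι → Fin ℓ, f (fun i => x i (ω i))
        ∂(Measure.pi fun i => Measure.pi fun _ : Fin ℓ => μ i)) ^ ((ℓ : ℝ) ^ Fintype.card ι)⁻¹ := by
  simp only [boxNormOn, mem_univ, not_true_eq_false, IsEmpty.forall_iff, implies_true,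
    filter_true, card_univ]

theorem boxNorm_mul_le_general {ι : Type*} [Fintype ι] [DecidableEq ι]
    {X : ι → Type*} [∀ i, MeasurableSpace (X i)] (μ : ∀ i, Measure (X i))
    (ℓ : ℕ)
    (p q : ℝ) (hp : 1 < p) (hpq : 1 / p + 1 / q = 1)
    (f g : (∀ i, X i) → ℝ)
    (hboxf : Integrable
      (fun x : ∀ i, Fin ℓ → X i => ∏ ω : ι → Fin ℓ, |f (fun i => x i (ω i))| ^ p)
      (Measure.pi fun i => Measure.pi fun _ : Fin ℓ => μ i))
    (hboxg : Integrable
      (fun x : ∀ i, Fin ℓ → X i => ∏ ω : ι → Fin ℓ, |g (fun i => x i (ω i))| ^ q)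
      (Measure.pi fun i => Measure.pi fun _ : Fin ℓ => μ i)) :
    boxNormOn μ Finset.univ ℓ (fun x => f x * g x) ≤
      pBoxNormOn μ Finset.univ ℓ p f * pBoxNormOn μ Finset.univ ℓ q g := by
  have hpq' : p.HolderConjugate q :=
    Real.holderConjugate_iff.mpr ⟨hp, by simpa only [one_div] using hpq⟩
  have holder := abs_integral_prod_mul_le_Lp_mul_Lq univ hpq' hboxf hboxg
  simp only [pBoxNormOn, boxNormOn_univ]
  exact rpow_le_of_abs_le_rpow_mul_rpow (by positivity) (by positivity) (by positivity) holder

/-- Hölder inequality for the `(ℓ,p)`-box norms. -/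
theorem boxNorm_mul_le {ι : Type*} [Fintype ι] [DecidableEq ι] [Nonempty ι]
    {X : ι → Type*} [∀ i, MeasurableSpace (X i)] (μ : ∀ i, Measure (X i))
    [∀ i, IsProbabilityMeasure (μ i)]
    (ℓ : ℕ) (hℓ : 2 ≤ ℓ) (hev : Even ℓ)
    (p q : ℝ) (hp : 1 < p) (hq : 1 < q) (hpq : 1 / p + 1 / q = 1)
    (f g : (∀ i, X i) → ℝ)
    (hf : MemLp f (ENNReal.ofReal p) (Measure.pi μ))
    (hg : MemLp g (ENNReal.ofReal q) (Measure.pi μ))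
    (hboxf : Integrable
      (fun x : ∀ i, Fin ℓ → X i => ∏ ω : ι → Fin ℓ, |f (fun i => x i (ω i))| ^ p)
      (Measure.pi fun i => Measure.pi fun _ : Fin ℓ => μ i))
    (hboxg : Integrable
      (fun x : ∀ i, Fin ℓ → X i => ∏ ω : ι → Fin ℓ, |g (fun i => x i (ω i))| ^ q)
      (Measure.pi fun i => Measure.pi fun _ : Fin ℓ => μ i)) :
    boxNormOn μ Finset.univ ℓ (fun x => f x * g x) ≤
      pBoxNormOn μ Finset.univ ℓ p f * pBoxNormOn μ Finset.univ ℓ q g :=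
  boxNorm_mul_le_general μ ℓ p q hp hpq f g hboxf hboxg
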